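/- A transitive directed acyclic graph (poset) P on a finite vertex set is realizable by intervals under the containment relation with all incomparable pairs overlapping (i.e., the complete mixed graph of P is a containment interval graph where arcs are containments and non-arcs are overlaps) if and only if P is a two-dimensional poset. -/

import Mathlib

/-!
Record a nonempty interval `[a, b]` as the point `(a, b)` of `ℝ × ℝᵒᵈ`: proper containment of
intervals becomes the strict product order, and the product order of two linear orders is the
intersection of its two lexicographic orders. So a containment representation gives two linear
orders. Conversely, if `ρ₁, ρ₂` are the ranks of the vertices in two linear orders on `n` vertices,
the intervals `[ρ₁ v, 2n - ρ₂ v]` all contain `n`, one contains another exactly when both ranks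
increase, and so incomparable vertices get overlapping intervals.
-/

/-- The closed interval on the real line represented by a pair of endpoints. -/
def iv (p : ℝ × ℝ) : Set ℝ := Set.Icc p.1 p.2

/-- Two intervals overlap: they intersect and neither contains the other. -/
def Overlaps (p q : ℝ × ℝ) : Prop :=
  (iv p ∩ iv q).Nonempty ∧ ¬ iv p ⊆ iv q ∧ ¬ iv q ⊆ iv p

open Function

theorem Prod.lt_iff_toLex_lt_and_toLex_swap_lt {α β : Type*} [LinearOrder α] [LinearOrder β]
    {x y : α × β} : x < y ↔ toLex x < toLex y ∧ toLex x.swap < toLex y.swap := by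
  rw [Prod.lt_iff, Prod.Lex.lt_iff, Prod.Lex.lt_iff]
  simp only [ofLex_toLex, Prod.fst_swap, Prod.snd_swap]
  grind

theorem exists_linearOrders_lt_iff_of_injective {V α β : Type*} [LinearOrder α] [LinearOrder β]
    {J : V → α × β} (hJ : Injective J) :
    ∃ s₁ s₂ : LinearOrder V, ∀ u v, J u < J v ↔ s₁.lt u v ∧ s₂.lt u v :=
  ⟨LinearOrder.lift' (toLex ∘ J) (toLex.injective.comp hJ),
    LinearOrder.lift' (toLex ∘ Prod.swap ∘ J) (toLex.injective.comp (Prod.swap_injective.comp hJ)),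
    fun _ _ => Prod.lt_iff_toLex_lt_and_toLex_swap_lt⟩

def toContainment (p : ℝ × ℝ) : ℝ × ℝᵒᵈ := (p.1, OrderDual.toDual p.2)

lemma toContainment_injective : Injective toContainment := fun _ _ h =>
  Prod.ext (congrArg Prod.fst h) (OrderDual.toDual.injective (congrArg Prod.snd h))

lemma iv_subset_iff {p q : ℝ × ℝ} (hq : q.1 ≤ q.2) :
    iv q ⊆ iv p ↔ toContainment p ≤ toContainment q :=
  Set.Icc_subset_Icc_iff hq

lemma iv_ssubset_iff {p q : ℝ × ℝ} (hp : p.1 ≤ p.2) (hq : q.1 ≤ q.2) :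
    iv q ⊂ iv p ↔ toContainment p < toContainment q := by
  rw [ssubset_iff_subset_not_subset, lt_iff_le_not_ge, iv_subset_iff hq, iv_subset_iff hp]

lemma injective_of_iff_ssubset_of_overlaps {V : Type*} {r : V → V → Prop} {I : V → ℝ × ℝ}
    (hr : ∀ u v, r u v ↔ iv (I v) ⊂ iv (I u))
    (hov : ∀ u v, u ≠ v → ¬ r u v → ¬ r v u → Overlaps (I u) (I v)) : Injective I := by
  intro u v huv
  by_contra hne
  have hnuv : ¬ r u v := by rw [hr, huv]; exact ssubset_irrefl _
  have hnvu : ¬ r v u := by rw [hr, huv]; exact ssubset_irrefl _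
  exact (hov u v hne hnuv hnvu).2.1 (by rw [huv])

section rank

variable {V : Type*} [Fintype V]

def rank (s : LinearOrder V) (v : V) : ℕ :=
  letI := s
  (Fintype.orderIsoFinOfCardEq V rfl).symm v

lemma rank_lt_card (s : LinearOrder V) (v : V) : rank s v < Fintype.card V :=
  Fin.isLt _

lemma rank_lt_rank_iff (s : LinearOrder V) {u v : V} : rank s u < rank s v ↔ s.lt u v :=
  letI := s
  Fin.val_fin_lt.trans (Fintype.orderIsoFinOfCardEq V rfl).symm.lt_iff_lt

lemma rank_injective (s : LinearOrder V) : Injective (rank s) :=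
  letI := s
  Fin.val_injective.comp (Fintype.orderIsoFinOfCardEq V rfl).symm.injective

def rankInterval (s₁ s₂ : LinearOrder V) (v : V) : ℝ × ℝ :=
  (rank s₁ v, 2 * Fintype.card V - rank s₂ v)

lemma card_mem_iv_rankInterval (s₁ s₂ : LinearOrder V) (v : V) :
    (Fintype.card V : ℝ) ∈ iv (rankInterval s₁ s₂ v) := by
  have h₁ : (rank s₁ v : ℝ) ≤ Fintype.card V := by exact_mod_cast (rank_lt_card s₁ v).le
  have h₂ : (rank s₂ v : ℝ) ≤ Fintype.card V := by exact_mod_cast (rank_lt_card s₂ v).le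
  exact ⟨h₁, by simp only [rankInterval]; linarith⟩

lemma rankInterval_fst_le_snd (s₁ s₂ : LinearOrder V) (v : V) :
    (rankInterval s₁ s₂ v).1 ≤ (rankInterval s₁ s₂ v).2 :=
  (card_mem_iv_rankInterval s₁ s₂ v).1.trans (card_mem_iv_rankInterval s₁ s₂ v).2

lemma iv_rankInterval_subset_iff (s₁ s₂ : LinearOrder V) {u v : V} (huv : u ≠ v) :
    iv (rankInterval s₁ s₂ v) ⊆ iv (rankInterval s₁ s₂ u) ↔ s₁.lt u v ∧ s₂.lt u v := by
  rw [iv_subset_iff (rankInterval_fst_le_snd s₁ s₂ v), ← rank_lt_rank_iff s₁,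
    ← rank_lt_rank_iff s₂, ← ((rank_injective s₁).ne huv).le_iff_lt,
    ← ((rank_injective s₂).ne huv).le_iff_lt]
  simp only [toContainment, rankInterval, Prod.mk_le_mk, OrderDual.toDual_le_toDual,
    sub_le_sub_iff_left, Nat.cast_le]

lemma iv_rankInterval_ssubset_iff (s₁ s₂ : LinearOrder V) (u v : V) :
    iv (rankInterval s₁ s₂ v) ⊂ iv (rankInterval s₁ s₂ u) ↔ s₁.lt u v ∧ s₂.lt u v := by
  rcases eq_or_ne u v with rfl | huv
  · simp only [ssubset_irrefl, false_iff, not_and]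
    exact fun h _ => lt_irrefl _ ((rank_lt_rank_iff s₁).2 h)
  rw [ssubset_iff_subset_not_subset, iv_rankInterval_subset_iff s₁ s₂ huv,
    iv_rankInterval_subset_iff s₁ s₂ huv.symm]
  exact and_iff_left_of_imp fun h h' =>
    lt_asymm ((rank_lt_rank_iff s₁).2 h.1) ((rank_lt_rank_iff s₁).2 h'.1)

end rank

theorem stmt14_general {V : Type*} [Fintype V] (r : V → V → Prop) :
    (∃ I : V → ℝ × ℝ, (∀ v, (I v).1 ≤ (I v).2) ∧
        (∀ u v, r u v ↔ iv (I v) ⊂ iv (I u)) ∧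
        (∀ u v, u ≠ v → ¬ r u v → ¬ r v u → Overlaps (I u) (I v))) ↔
    (∃ s₁ s₂ : LinearOrder V, ∀ u v, r u v ↔ (s₁.lt u v ∧ s₂.lt u v)) := by
  constructor
  · rintro ⟨I, hI, hr, hov⟩
    obtain ⟨s₁, s₂, hs⟩ := exists_linearOrders_lt_iff_of_injective
      (toContainment_injective.comp (injective_of_iff_ssubset_of_overlaps hr hov))
    exact ⟨s₁, s₂, fun u v => (hr u v).trans ((iv_ssubset_iff (hI u) (hI v)).trans (hs u v))⟩
  · rintro ⟨s₁, s₂, hr⟩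
    refine ⟨rankInterval s₁ s₂, rankInterval_fst_le_snd s₁ s₂,
      fun u v => (hr u v).trans (iv_rankInterval_ssubset_iff s₁ s₂ u v).symm,
      fun u v huv hnuv hnvu =>
        ⟨⟨_, card_mem_iv_rankInterval s₁ s₂ u, card_mem_iv_rankInterval s₁ s₂ v⟩, ?_, ?_⟩⟩
    · rwa [iv_rankInterval_subset_iff s₁ s₂ huv.symm, ← hr]
    · rwa [iv_rankInterval_subset_iff s₁ s₂ huv, ← hr]

/-- A transitive DAG (strict partial order) `r` on a finite vertex set admits a
containment interval representation — intervals with `r u v` iff the interval of `u`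
properly contains that of `v`, and incomparable pairs overlapping — if and only if
`r` is a two-dimensional poset, i.e. the intersection of two linear orders. -/
theorem stmt14 {V : Type*} [Fintype V] (r : V → V → Prop)
    (htrans : ∀ u v w, r u v → r v w → r u w)
    (hirrefl : ∀ v, ¬ r v v) :
    (∃ I : V → ℝ × ℝ, (∀ v, (I v).1 ≤ (I v).2) ∧
        (∀ u v, r u v ↔ iv (I v) ⊂ iv (I u)) ∧
        (∀ u v, u ≠ v → ¬ r u v → ¬ r v u → Overlaps (I u) (I v))) ↔
    (∃ s₁ s₂ : LinearOrder V, ∀ u v, r u v ↔ (s₁.lt u v ∧ s₂.lt u v)) :=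
  stmt14_general r
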